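/- Let X be the (2n+1)×(2n+1) block matrix with rows/columns indexed by {0} ∪ {1,…,n} ∪ {n+1,…,2n}: the (0, 2n) entry is 1, the (n, 0) entry is −1, the (1,…,n)×(1,…,n) block is J_n, the (n+1,…,2n)×(n+1,…,2n) block is −J_nᵗ, and all other entries are 0. Let u ∈ 𝔽^{2n+1} be a vector whose (n+2)-nd coordinate is nonzero. Then {u, Xu, …, X^{2n}u} is a basis of 𝔽^{2n+1}. -/

import Mathlib

open Matrix

/-- The `n×n` nilpotent Jordan block, with `1`'s on the superdiagonal. -/
def Jmat (𝔽 : Type*) [Field 𝔽] (n : ℕ) : Matrix (Fin n) (Fin n) 𝔽 :=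
  Matrix.of fun i j => if (i : ℕ) + 1 = (j : ℕ) then 1 else 0

def Xmat (𝔽 : Type*) [Field 𝔽] (n : ℕ) (hn : 0 < n) :
    Matrix (Fin 1 ⊕ (Fin n ⊕ Fin n)) (Fin 1 ⊕ (Fin n ⊕ Fin n)) 𝔽 :=
  Matrix.fromBlocks 0
    (Matrix.of fun _ j => if j = Sum.inr (⟨n - 1, Nat.sub_lt hn Nat.one_pos⟩ : Fin n) then (1 : 𝔽) else 0)
    (Matrix.of fun i _ => if i = Sum.inl (⟨n - 1, Nat.sub_lt hn Nat.one_pos⟩ : Fin n) then (-1 : 𝔽) else 0)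
    (Matrix.fromBlocks (Jmat 𝔽 n) 0 0 (-(Jmat 𝔽 n)ᵀ))
section aux
variable {𝔽 : Type*} [Field 𝔽] {n : ℕ}

def ub (u : Fin 1 ⊕ (Fin n ⊕ Fin n) → 𝔽) (j : ℕ) : 𝔽 :=
  if h : j < n then u (Sum.inr (Sum.inr ⟨j, h⟩)) else 0
def ua (u : Fin 1 ⊕ (Fin n ⊕ Fin n) → 𝔽) (j : ℕ) : 𝔽 :=
  if h : j < n then u (Sum.inr (Sum.inl ⟨j, h⟩)) else 0

def Vdef (u : Fin 1 ⊕ (Fin n ⊕ Fin n) → 𝔽) (k : ℕ) : Fin 1 ⊕ (Fin n ⊕ Fin n) → 𝔽 := fun x =>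
  match x with
  | Sum.inl _ => if k = 0 then u (Sum.inl 0) else if k ≤ n then (-1)^(k-1) * ub u (n-k) else 0
  | Sum.inr (Sum.inl i) =>
      if (i:ℕ)+k < n then ua u ((i:ℕ)+k)
      else if (i:ℕ)+k = n then -(u (Sum.inl 0))
      else if (i:ℕ)+k ≤ 2*n then (-1)^((i:ℕ)+k-n) * ub u (2*n - (i:ℕ) - k)
      else 0
  | Sum.inr (Sum.inr i) => if k ≤ (i:ℕ) then (-1)^k * ub u ((i:ℕ)-k) else 0

lemma Vdef_inl (u : Fin 1 ⊕ (Fin n ⊕ Fin n) → 𝔽) (k : ℕ) (z : Fin 1) :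
    Vdef u k (Sum.inl z) = if k = 0 then u (Sum.inl 0) else if k ≤ n then (-1)^(k-1) * ub u (n-k) else 0 := rfl
lemma Vdef_ina (u : Fin 1 ⊕ (Fin n ⊕ Fin n) → 𝔽) (k : ℕ) (i : Fin n) :
    Vdef u k (Sum.inr (Sum.inl i)) =
      if (i:ℕ)+k < n then ua u ((i:ℕ)+k)
      else if (i:ℕ)+k = n then -(u (Sum.inl 0))
      else if (i:ℕ)+k ≤ 2*n then (-1)^((i:ℕ)+k-n) * ub u (2*n - (i:ℕ) - k)
      else 0 := rfl
lemma Vdef_inb (u : Fin 1 ⊕ (Fin n ⊕ Fin n) → 𝔽) (k : ℕ) (i : Fin n) :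
    Vdef u k (Sum.inr (Sum.inr i)) = if k ≤ (i:ℕ) then (-1)^k * ub u ((i:ℕ)-k) else 0 := rfl

lemma Vdef_zero (u : Fin 1 ⊕ (Fin n ⊕ Fin n) → 𝔽) : Vdef u 0 = u := by
  funext x
  rcases x with z | (i | i)
  · have : z = 0 := Subsingleton.elim _ _
    simp [Vdef_inl, this]
  · simp [Vdef_ina, ua, i.isLt]
  · simp [Vdef_inb, ub, i.isLt]

variable (hn : 0 < n) (v : Fin 1 ⊕ (Fin n ⊕ Fin n) → 𝔽)

lemma row_e0 (z : Fin 1) : (Xmat 𝔽 n hn *ᵥ v) (Sum.inl z) = v (Sum.inr (Sum.inr ⟨n-1, Nat.sub_lt hn Nat.one_pos⟩)) := by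
  simp [Xmat, mulVec, dotProduct, Fintype.sum_sum_type, fromBlocks]

lemma row_a (i : Fin n) : (Xmat 𝔽 n hn *ᵥ v) (Sum.inr (Sum.inl i)) =
    (if h : (i:ℕ)+1 < n then v (Sum.inr (Sum.inl ⟨i+1, h⟩)) else -v (Sum.inl 0)) := by
  have hsum : ∑ x : Fin n, (if (i:ℕ) + 1 = (x:ℕ) then v (Sum.inr (Sum.inl x)) else 0)
      = if h : (i:ℕ)+1 < n then v (Sum.inr (Sum.inl ⟨i+1, h⟩)) else 0 := by
    split_ifs with h
    · have h2 : ∀ x : Fin n, ((i:ℕ) + 1 = (x:ℕ)) ↔ (x = ⟨(i:ℕ)+1, h⟩) := by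
        intro x; simp [Fin.ext_iff]; omega
      simp_rw [h2]; simp
    · exact Finset.sum_eq_zero fun x _ => by rw [if_neg]; omega
  simp only [Xmat, mulVec, dotProduct, Fintype.sum_sum_type, fromBlocks, Jmat,
    Matrix.of_apply, Sum.elim_inl, Sum.elim_inr, Matrix.zero_apply, mul_zero, zero_mul,
    Finset.sum_const_zero, add_zero, zero_add, ite_mul, one_mul, neg_mul, neg_one_mul]
  rw [hsum]
  rcases eq_or_ne i (⟨n-1, Nat.sub_lt hn Nat.one_pos⟩ : Fin n) with h | h
  · have hi : (i:ℕ) = n - 1 := by rw [h]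
    rw [dif_neg (by omega), dif_neg (by omega)]
    simp [h]
  · have hi : (i:ℕ) ≠ n - 1 := by simpa [Fin.ext_iff] using h
    have hlt : (i:ℕ) + 1 < n := by omega
    rw [dif_pos hlt, dif_pos hlt]
    simp [h]

lemma row_b (i : Fin n) : (Xmat 𝔽 n hn *ᵥ v) (Sum.inr (Sum.inr i)) =
    (if h : 0 < (i:ℕ) then -v (Sum.inr (Sum.inr ⟨(i:ℕ)-1, by omega⟩)) else 0) := by
  simp only [Xmat, mulVec, dotProduct, Fintype.sum_sum_type, fromBlocks, Jmat,
    Matrix.of_apply, Sum.elim_inl, Sum.elim_inr, Matrix.zero_apply, mul_zero, zero_mul,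
    Finset.sum_const_zero, add_zero, zero_add, ite_mul, one_mul, neg_mul, neg_one_mul,
    Matrix.neg_apply, Matrix.transpose_apply]
  rw [Finset.sum_eq_zero (fun x _ => by simp : ∀ x ∈ Finset.univ,
    (if (Sum.inr i : Fin n ⊕ Fin n) = Sum.inl ⟨n-1, Nat.sub_lt hn Nat.one_pos⟩ then -v (Sum.inl x) else 0) = 0),
    zero_add]
  split_ifs with h
  · have h2 : ∀ x : Fin n, ((x:ℕ) + 1 = (i:ℕ)) ↔ (x = ⟨(i:ℕ)-1, by omega⟩) := by
      intro x; simp [Fin.ext_iff]; omega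
    simp_rw [h2]
    simp
  · exact Finset.sum_eq_zero fun x _ => by rw [if_neg (by omega), neg_zero]

lemma Vdef_step (u : Fin 1 ⊕ (Fin n ⊕ Fin n) → 𝔽) (k : ℕ) :
    Xmat 𝔽 n hn *ᵥ Vdef u k = Vdef u (k+1) := by
  funext x
  rcases x with z | (i | i)
  · rw [row_e0, Vdef_inl, Vdef_inb]
    rw [if_neg (by omega : ¬ k+1 = 0)]
    by_cases hk : k + 1 ≤ n
    · rw [if_pos (show k ≤ ((⟨n-1, Nat.sub_lt hn Nat.one_pos⟩ : Fin n) : ℕ) by simp; omega), if_pos hk,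
        show ((⟨n-1, Nat.sub_lt hn Nat.one_pos⟩ : Fin n) : ℕ) - k = n - (k+1) by simp; omega,
        show k+1-1 = k from rfl]
    · rw [if_neg (show ¬ k ≤ ((⟨n-1, Nat.sub_lt hn Nat.one_pos⟩ : Fin n) : ℕ) by simp; omega), if_neg hk]
  · rw [row_a]
    by_cases h : (i:ℕ) + 1 < n
    · rw [dif_pos h, Vdef_ina, Vdef_ina,
        show ((⟨(i:ℕ)+1, h⟩ : Fin n) : ℕ) = (i:ℕ)+1 from rfl,
        show (i:ℕ)+1+k = (i:ℕ)+(k+1) by omega,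
        show 2*n - ((i:ℕ)+1) - k = 2*n - (i:ℕ) - (k+1) by omega]
    · rw [dif_neg h, Vdef_inl, Vdef_ina]
      have hi : (i:ℕ) = n - 1 := by have := i.isLt; omega
      cases k with
      | zero =>
        rw [if_pos rfl, if_neg (show ¬ ((i:ℕ) + (0+1) < n) by omega),
          if_pos (show (i:ℕ) + (0+1) = n by omega)]
      | succ m =>
        rw [if_neg (show ¬ (m+1 = 0) by omega),
          if_neg (show ¬ ((i:ℕ) + (m+1+1) < n) by omega),
          if_neg (show ¬ ((i:ℕ) + (m+1+1) = n) by omega)]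
        by_cases hm : m + 1 ≤ n
        · rw [if_pos hm, if_pos (show (i:ℕ) + (m+1+1) ≤ 2*n by omega),
            show (i:ℕ) + (m+1+1) - n = m+1 by omega,
            show 2*n - (i:ℕ) - (m+1+1) = n - (m+1) by omega,
            show m+1-1 = m from rfl, pow_succ]
          ring
        · rw [if_neg hm, if_neg (show ¬ ((i:ℕ) + (m+1+1) ≤ 2*n) by omega), neg_zero]
  · rw [row_b]
    by_cases h : 0 < (i:ℕ)
    · rw [dif_pos h, Vdef_inb, Vdef_inb,
        show ((⟨(i:ℕ)-1, by omega⟩ : Fin n) : ℕ) = (i:ℕ)-1 from rfl]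
      by_cases hk : k + 1 ≤ (i:ℕ)
      · rw [if_pos (by omega), if_pos hk,
          show (i:ℕ)-1-k = (i:ℕ)-(k+1) by omega, pow_succ]
        ring
      · rw [if_neg (by omega), if_neg hk, neg_zero]
    · rw [dif_neg h, Vdef_inb, if_neg (by omega)]

lemma Vdef_pow (u : Fin 1 ⊕ (Fin n ⊕ Fin n) → 𝔽) (k : ℕ) :
    (Xmat 𝔽 n hn ^ k) *ᵥ u = Vdef u k := by
  induction k with
  | zero => simp [Vdef_zero]
  | succ m ih => rw [pow_succ', ← mulVec_mulVec, ih, Vdef_step]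

lemma Vdef_top (u : Fin 1 ⊕ (Fin n ⊕ Fin n) → 𝔽) : Vdef u (2*n+1) = 0 := by
  funext x
  rcases x with z | (i | i)
  · rw [Vdef_inl, if_neg (by omega), if_neg (by omega)]; rfl
  · have := i.isLt
    rw [Vdef_ina, if_neg (by omega), if_neg (by omega), if_neg (by omega)]; rfl
  · have := i.isLt
    rw [Vdef_inb, if_neg (by omega)]; rfl

lemma pow_zero_of_big (u : Fin 1 ⊕ (Fin n ⊕ Fin n) → 𝔽) (m : ℕ) (hm : 2*n+1 ≤ m) :
    (Xmat 𝔽 n hn ^ m) *ᵥ u = 0 := by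
  obtain ⟨a, rfl⟩ : ∃ a, m = a + (2*n+1) := ⟨m - (2*n+1), by omega⟩
  rw [pow_add, ← mulVec_mulVec, Vdef_pow hn u (2*n+1), Vdef_top, mulVec_zero]

lemma Vdef_eval (u : Fin 1 ⊕ (Fin n ⊕ Fin n) → 𝔽) :
    ((Xmat 𝔽 n hn ^ (2*n)) *ᵥ u) (Sum.inr (Sum.inl ⟨0, hn⟩)) =
      (-1)^n * u (Sum.inr (Sum.inr ⟨0, hn⟩)) := by
  rw [Vdef_pow hn, Vdef_ina, if_neg (by simp; omega), if_neg (by simp; omega),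
    if_pos (by simp)]
  have h0 : ((⟨0, hn⟩ : Fin n) : ℕ) = 0 := rfl
  rw [h0]
  have : (0 + 2*n - n) = n := by omega
  rw [this, show 2*n - 0 - 2*n = 0 by omega]
  rw [ub, dif_pos hn]
end aux

/-- `𝔽^{2n+1}` is modeled as `Fin 1 ⊕ (Fin n ⊕ Fin n) → 𝔽`, with index `0`
corresponding to `Sum.inl 0`, indices `1,…,n` to `Sum.inr (Sum.inl ·)` and `n+1,…,2n` to
`Sum.inr (Sum.inr ·)`.  `X` has `(0,2n)` entry `1`, `(n,0)` entry `-1`, middle block `Jₙ`,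
last block `-Jₙᵗ`.  If the `(n+2)`-nd coordinate of `u` (i.e. `u (inr (inr 0))`) is nonzero
then `u, Xu, …, X^{2n}u` is a basis of `𝔽^{2n+1}`. -/
theorem stmt3 {𝔽 : Type*} [Field 𝔽] [IsAlgClosed 𝔽] [CharZero 𝔽]
    {n : ℕ} (hn : 0 < n) (u : Fin 1 ⊕ (Fin n ⊕ Fin n) → 𝔽)
    (hu : u (Sum.inr (Sum.inr ⟨0, hn⟩)) ≠ 0) :
    letI X : Matrix (Fin 1 ⊕ (Fin n ⊕ Fin n)) (Fin 1 ⊕ (Fin n ⊕ Fin n)) 𝔽 :=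
      Matrix.fromBlocks 0
        (Matrix.of fun _ j => if j = Sum.inr (⟨n - 1, by omega⟩ : Fin n) then (1 : 𝔽) else 0)
        (Matrix.of fun i _ => if i = Sum.inl (⟨n - 1, by omega⟩ : Fin n) then (-1 : 𝔽) else 0)
        (Matrix.fromBlocks (Jmat 𝔽 n) 0 0 (-(Jmat 𝔽 n)ᵀ))
    LinearIndependent 𝔽 (fun i : Fin (2 * n + 1) => (X ^ (i : ℕ)) *ᵥ u) ∧
      Submodule.span 𝔽 (Set.range fun i : Fin (2 * n + 1) => (X ^ (i : ℕ)) *ᵥ u) = ⊤ := by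
  show (LinearIndependent 𝔽 fun i : Fin (2*n+1) => (Xmat 𝔽 n hn ^ (i:ℕ)) *ᵥ u) ∧
    Submodule.span 𝔽 (Set.range fun i : Fin (2*n+1) => (Xmat 𝔽 n hn ^ (i:ℕ)) *ᵥ u) = ⊤
  have hval : ((Xmat 𝔽 n hn ^ (2*n)) *ᵥ u) (Sum.inr (Sum.inl ⟨0, hn⟩)) ≠ 0 := by
    rw [Vdef_eval hn u]
    exact mul_ne_zero (pow_ne_zero _ (by norm_num)) hu
  have hli : LinearIndependent 𝔽 (fun i : Fin (2*n+1) => (Xmat 𝔽 n hn ^ (i:ℕ)) *ᵥ u) := by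
    rw [Fintype.linearIndependent_iff]
    intro g hg
    have main : ∀ N : ℕ, ∀ i : Fin (2*n+1), (i:ℕ) < N → g i = 0 := by
      intro N
      induction N with
      | zero => exact fun i hi => absurd hi (by omega)
      | succ N ih =>
        intro i hi
        rcases lt_or_ge (i:ℕ) N with h | h
        · exact ih i h
        have hiN : (i:ℕ) = N := by omega
        have hN : N ≤ 2*n := by have := i.isLt; omega
        have happ := congrArg (fun w => (Xmat 𝔽 n hn ^ (2*n - N)) *ᵥ w) hg
        simp only [mulVec_zero] at happ
        have hswap : (Xmat 𝔽 n hn ^ (2*n - N)) *ᵥ (∑ j : Fin (2*n+1), g j • (Xmat 𝔽 n hn ^ (j:ℕ)) *ᵥ u)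
            = ∑ j : Fin (2*n+1), (Xmat 𝔽 n hn ^ (2*n - N)) *ᵥ (g j • (Xmat 𝔽 n hn ^ (j:ℕ)) *ᵥ u) :=
          map_sum (mulVecLin (Xmat 𝔽 n hn ^ (2*n - N))) _ _
        rw [hswap] at happ
        have hterm : ∀ j : Fin (2*n+1), j ≠ i →
            (Xmat 𝔽 n hn ^ (2*n - N)) *ᵥ (g j • (Xmat 𝔽 n hn ^ (j:ℕ)) *ᵥ u) = 0 := by
          intro j hj
          rcases lt_or_gt_of_ne (fun hc : (j:ℕ) = (i:ℕ) => hj (Fin.ext hc)) with hlt | hgt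
          · rw [ih j (by omega), zero_smul, mulVec_zero]
          · rw [mulVec_smul, mulVec_mulVec, ← pow_add,
              pow_zero_of_big hn u _ (by omega), smul_zero]
        rw [Finset.sum_eq_single i (fun j _ hj => hterm j hj)
          (fun hni => absurd (Finset.mem_univ i) hni)] at happ
        have : (Xmat 𝔽 n hn ^ (2*n - N)) *ᵥ (g i • (Xmat 𝔽 n hn ^ (i:ℕ)) *ᵥ u) = 0 := happ
        rw [mulVec_smul, mulVec_mulVec, ← pow_add, show 2*n - N + (i:ℕ) = 2*n by omega] at this
        have hev := congrFun this (Sum.inr (Sum.inl ⟨0, hn⟩))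
        simp only [Pi.smul_apply, smul_eq_mul, Pi.zero_apply] at hev
        exact (mul_eq_zero.mp hev).resolve_right hval
    exact fun i => main (2*n+1) i i.isLt
  refine ⟨hli, hli.span_eq_top_of_card_eq_finrank ?_⟩
  rw [Module.finrank_fintype_fun_eq_card]
  simp [Fintype.card_sum]
  ring
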